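/- arXiv:1903.08780 — 3 statements merged into one kernel-verified Lean document; each statement's English description precedes it below -/
import Mathlib

section
/- Suppose the coupled Riccati ODE system for $(\mathbf{P}_0, \mathbf{P}_1, \dots, \mathbf{P}_N)$ (the major-minor player Riccati system) has a solution on $[0,T]$, and that the system is invariant under simultaneous conjugation of all $\mathbf{P}_l$ by $J_{2,i+1}$ together with swapping the roles of players $1$ and $i$. Then $\mathbf{P}_i(t) = J_{2,i+1}^T \mathbf{P}_1(t) J_{2,i+1}$ for all $2 \le i \le N$ and $t \in [0,T]$, and $J_{2,i+1}^T \mathbf{P}_0(t) J_{2,i+1} = \mathbf{P}_0(t)$. -/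
open Set Matrix

attribute [local instance] Matrix.normedAddCommGroup Matrix.normedSpace

abbrev ES (N n : ℕ) : Type :=
  Fin (N+1) → Matrix (Fin (N+1) × Fin n) (Fin (N+1) × Fin n) ℝ

section helpers
variable {N n : ℕ}

lemma cd_entry (k : Fin (N+1)) (a b : Fin (N+1) × Fin n) :
    ContDiff ℝ 1 (fun x : ES N n => x k a b) := by fun_prop

/-- The vector field of the coupled Riccati system (with constant matrices folded). -/
noncomputable def vf (A C0 : Matrix (Fin (N+1) × Fin n) (Fin (N+1) × Fin n) ℝ)
    (CC Q : Fin (N+1) → Matrix (Fin (N+1) × Fin n) (Fin (N+1) × Fin n) ℝ) :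
    (Fin (N+1) → Matrix (Fin (N+1) × Fin n) (Fin (N+1) × Fin n) ℝ) →
      (Fin (N+1) → Matrix (Fin (N+1) × Fin n) (Fin (N+1) × Fin n) ℝ) := fun x l =>
  if l = 0 then
    -(x 0 * A + Aᵀ * x 0) + x 0 * C0 * x 0
      + ∑ k ∈ Finset.univ.filter (fun k : Fin (N+1) => k ≠ 0),
          (x 0 * CC k * x k + x k * CC k * x 0) - Q 0
  else
    -(x l * A + Aᵀ * x l) - x l * CC l * x l
      + (x l * C0 * x 0 + x 0 * C0 * x l)
      + ∑ k ∈ Finset.univ.filter (fun k : Fin (N+1) => k ≠ 0),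
          (x l * CC k * x k + x k * CC k * x l) - Q l

variable {A C0 : Matrix (Fin (N+1) × Fin n) (Fin (N+1) × Fin n) ℝ}
  {CC Q : Fin (N+1) → Matrix (Fin (N+1) × Fin n) (Fin (N+1) × Fin n) ℝ}

lemma vf_zero (x : Fin (N+1) → Matrix (Fin (N+1) × Fin n) (Fin (N+1) × Fin n) ℝ) :
    vf A C0 CC Q x 0 =
      -(x 0 * A + Aᵀ * x 0) + x 0 * C0 * x 0
        + ∑ k ∈ Finset.univ.filter (fun k : Fin (N+1) => k ≠ 0),
            (x 0 * CC k * x k + x k * CC k * x 0) - Q 0 := by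
  simp [vf]

lemma vf_ne (x : Fin (N+1) → Matrix (Fin (N+1) × Fin n) (Fin (N+1) × Fin n) ℝ)
    {l : Fin (N+1)} (hl : l ≠ 0) :
    vf A C0 CC Q x l =
      -(x l * A + Aᵀ * x l) - x l * CC l * x l
        + (x l * C0 * x 0 + x 0 * C0 * x l)
        + ∑ k ∈ Finset.univ.filter (fun k : Fin (N+1) => k ≠ 0),
            (x l * CC k * x k + x k * CC k * x l) - Q l := by
  simp [vf, hl]

lemma cd_quad (k1 k2 : Fin (N+1)) (C : Matrix (Fin (N+1) × Fin n) (Fin (N+1) × Fin n) ℝ)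
    (a b : Fin (N+1) × Fin n) :
    ContDiff ℝ 1 (show ES N n → ℝ from
      fun x : Fin (N+1) → Matrix (Fin (N+1) × Fin n) (Fin (N+1) × Fin n) ℝ =>
        (x k1 * C * x k2) a b) := by
  show ContDiff ℝ 1 (fun x : ES N n => ∑ c, (∑ d, x k1 a d * C d c) * x k2 c b)
  exact ContDiff.sum fun c _ =>
    (ContDiff.sum fun d _ => (cd_entry k1 a d).mul contDiff_const).mul (cd_entry k2 c b)

lemma cd_linL (k : Fin (N+1)) (C : Matrix (Fin (N+1) × Fin n) (Fin (N+1) × Fin n) ℝ)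
    (a b : Fin (N+1) × Fin n) :
    ContDiff ℝ 1 (show ES N n → ℝ from
      fun x : Fin (N+1) → Matrix (Fin (N+1) × Fin n) (Fin (N+1) × Fin n) ℝ =>
        (x k * C) a b) := by
  show ContDiff ℝ 1 (fun x : ES N n => ∑ c, x k a c * C c b)
  exact ContDiff.sum fun c _ => (cd_entry k a c).mul contDiff_const

lemma cd_linR (C : Matrix (Fin (N+1) × Fin n) (Fin (N+1) × Fin n) ℝ) (k : Fin (N+1))
    (a b : Fin (N+1) × Fin n) :
    ContDiff ℝ 1 (show ES N n → ℝ from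
      fun x : Fin (N+1) → Matrix (Fin (N+1) × Fin n) (Fin (N+1) × Fin n) ℝ =>
        (C * x k) a b) := by
  show ContDiff ℝ 1 (fun x : ES N n => ∑ c, C a c * x k c b)
  exact ContDiff.sum fun c _ => contDiff_const.mul (cd_entry k c b)

lemma vf_contDiff (A C0 : Matrix (Fin (N+1) × Fin n) (Fin (N+1) × Fin n) ℝ)
    (CC Q : Fin (N+1) → Matrix (Fin (N+1) × Fin n) (Fin (N+1) × Fin n) ℝ) :
    ContDiff ℝ 1 (show ES N n → ES N n from vf A C0 CC Q) := by
  rw [contDiff_pi]; intro l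
  refine contDiff_pi.2 ?_; intro a
  refine contDiff_pi.2 ?_; intro b
  by_cases hl : l = 0
  · subst hl
    simp only [vf_zero, Matrix.sub_apply, Matrix.add_apply, Matrix.neg_apply, Matrix.sum_apply]
    exact ((((((cd_linL 0 A a b).add (cd_linR Aᵀ 0 a b)).neg).add (cd_quad 0 0 C0 a b)).add
      (ContDiff.sum fun k _ =>
        (cd_quad 0 k (CC k) a b).add (cd_quad k 0 (CC k) a b))).sub contDiff_const)
  · simp only [vf_ne _ hl, Matrix.sub_apply, Matrix.add_apply, Matrix.neg_apply,
      Matrix.sum_apply]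
    exact ((((((cd_linL l A a b).add (cd_linR Aᵀ l a b)).neg).sub
      (cd_quad l l (CC l) a b)).add
      ((cd_quad l 0 C0 a b).add (cd_quad 0 l C0 a b))).add
      (ContDiff.sum fun k _ =>
        (cd_quad l k (CC k) a b).add (cd_quad k l (CC k) a b))).sub contDiff_const

set_option maxHeartbeats 2000000 in
lemma vf_conj (σ : Equiv.Perm (Fin (N+1))) (hσ0 : σ 0 = 0) (hσinv : ∀ k, σ (σ k) = k)
    (J : Matrix (Fin (N+1) × Fin n) (Fin (N+1) × Fin n) ℝ) (hJJ : J * J = 1)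
    (hA : J * A * J = A) (hA' : J * Aᵀ * J = Aᵀ) (hC0 : J * C0 * J = C0)
    (hCC : ∀ k, J * CC k * J = CC (σ k)) (hQ : ∀ k, J * Q k * J = Q (σ k))
    (x : Fin (N+1) → Matrix (Fin (N+1) × Fin n) (Fin (N+1) × Fin n) ℝ) (l : Fin (N+1)) :
    vf A C0 CC Q (fun k => J * x (σ k) * J) l = J * vf A C0 CC Q x (σ l) * J := by
  have key2 : ∀ U V : Matrix (Fin (N+1) × Fin n) (Fin (N+1) × Fin n) ℝ,
      J * (U * V) * J = (J * U * J) * (J * V * J) := by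
    intro U V
    calc J * (U * V) * J = J * U * (J * J) * V * J := by rw [hJJ]; noncomm_ring
      _ = (J * U * J) * (J * V * J) := by noncomm_ring
  have hmem : ∀ k : Fin (N+1),
      k ∈ Finset.univ.filter (fun k : Fin (N+1) => k ≠ 0) ↔
      σ k ∈ Finset.univ.filter (fun k : Fin (N+1) => k ≠ 0) := by
    intro k
    simp only [Finset.mem_filter, Finset.mem_univ, true_and]
    constructor
    · intro hk h; exact hk (by rw [← hσinv k, h, hσ0])
    · intro hk h; exact hk (by rw [h, hσ0])
  by_cases hl : l = 0
  · subst hl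
    rw [hσ0, vf_zero, vf_zero]
    simp only [Matrix.mul_add, Matrix.add_mul, Matrix.mul_neg, Matrix.neg_mul,
      Matrix.mul_sub, Matrix.sub_mul, Finset.mul_sum, Finset.sum_mul]
    simp only [key2, hA, hA', hC0, hCC, hQ, hσ0, hσinv]
    congr 1
    congr 1
    refine Finset.sum_equiv σ (fun k => hmem k) ?_
    intro k _
    rw [hσinv]
  · have hl' : σ l ≠ 0 := fun h => hl (by rw [← hσinv l, h, hσ0])
    rw [vf_ne _ hl, vf_ne _ hl']
    simp only [Matrix.mul_add, Matrix.add_mul, Matrix.mul_neg, Matrix.neg_mul,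
      Matrix.mul_sub, Matrix.sub_mul, Finset.mul_sum, Finset.sum_mul]
    simp only [key2, hA, hA', hC0, hCC, hQ, hσ0, hσinv]
    congr 1
    congr 1
    refine Finset.sum_equiv σ (fun k => hmem k) ?_
    intro k _
    rw [hσinv]

/-- pi-version of `HasDerivWithinAt`. -/
lemma my_hasDerivWithinAt_pi {ι : Type*} [Fintype ι] {F : ι → Type*}
    [∀ i, NormedAddCommGroup (F i)] [∀ i, NormedSpace ℝ (F i)]
    {f : ℝ → ∀ i, F i} {f' : ∀ i, F i} {s : Set ℝ} {x : ℝ}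
    (h : ∀ i, HasDerivWithinAt (fun t => f t i) (f' i) s x) :
    HasDerivWithinAt f f' s x := by
  rw [hasDerivWithinAt_iff_hasFDerivWithinAt]
  have h2 : HasFDerivWithinAt f
      (ContinuousLinearMap.pi fun i => (1 : ℝ →L[ℝ] ℝ).smulRight (f' i)) s x := by
    apply hasFDerivWithinAt_pi'.2
    intro i
    exact (h i).hasFDerivWithinAt
  exact h2

end helpers

set_option maxHeartbeats 2000000 in
/-- Exchangeability of the major–minor player coupled Riccati system: if
`(𝐏₀, …, 𝐏_N)` solves the system on `[0,T]` and the coefficient matrices are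
invariant under simultaneous conjugation by the block-swap matrix `J = J_{2,i+1}`
together with swapping the roles of players `1` and `i`, then
`𝐏ᵢ(t) = Jᵀ 𝐏₁(t) J` and `Jᵀ 𝐏₀(t) J = 𝐏₀(t)` on `[0,T]`. -/
theorem coupled_riccati_exchangeability (N n n1 : ℕ) (T : ℝ) (hT : 0 ≤ T)
    (Ahat : Matrix (Fin (N + 1) × Fin n) (Fin (N + 1) × Fin n) ℝ)
    (Bbig : Fin (N + 1) → Matrix (Fin (N + 1) × Fin n) (Fin n1) ℝ)
    (Qbig Qfbig : Fin (N + 1) → Matrix (Fin (N + 1) × Fin n) (Fin (N + 1) × Fin n) ℝ)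
    (R0 R : Matrix (Fin n1) (Fin n1) ℝ)
    (P : Fin (N + 1) → ℝ → Matrix (Fin (N + 1) × Fin n) (Fin (N + 1) × Fin n) ℝ)
    (hP0 : ∀ t ∈ Icc 0 T, ∀ a b, HasDerivWithinAt (fun s => P 0 s a b)
      ((-(P 0 t * Ahat + Ahatᵀ * P 0 t)
        + P 0 t * Bbig 0 * R0⁻¹ * (Bbig 0)ᵀ * P 0 t
        + ∑ k ∈ Finset.univ.filter (fun k : Fin (N + 1) => k ≠ 0),
            (P 0 t * Bbig k * R⁻¹ * (Bbig k)ᵀ * P k t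
              + P k t * Bbig k * R⁻¹ * (Bbig k)ᵀ * P 0 t)
        - Qbig 0) a b) (Icc 0 T) t)
    (hPi : ∀ i : Fin (N + 1), i ≠ 0 → ∀ t ∈ Icc 0 T, ∀ a b,
      HasDerivWithinAt (fun s => P i s a b)
        ((-(P i t * Ahat + Ahatᵀ * P i t)
          - P i t * Bbig i * R⁻¹ * (Bbig i)ᵀ * P i t
          + (P i t * Bbig 0 * R0⁻¹ * (Bbig 0)ᵀ * P 0 t
              + P 0 t * Bbig 0 * R0⁻¹ * (Bbig 0)ᵀ * P i t)
          + ∑ k ∈ Finset.univ.filter (fun k : Fin (N + 1) => k ≠ 0),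
              (P i t * Bbig k * R⁻¹ * (Bbig k)ᵀ * P k t
                + P k t * Bbig k * R⁻¹ * (Bbig k)ᵀ * P i t)
          - Qbig i) a b) (Icc 0 T) t)
    (hPT : ∀ j, P j T = Qfbig j)
    (i : Fin (N + 1)) (hi0 : i ≠ 0) (hi1 : i ≠ 1)
    (J : Matrix (Fin (N + 1) × Fin n) (Fin (N + 1) × Fin n) ℝ)
    (hJ : ∀ p q : Fin (N + 1) × Fin n,
      J p q = if q.1 = Equiv.swap 1 i p.1 ∧ q.2 = p.2 then 1 else 0)
    (hA : J * Ahat * J = Ahat)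
    (hB : ∀ k, J * Bbig k = Bbig (Equiv.swap 1 i k))
    (hQ : ∀ k, J * Qbig k * J = Qbig (Equiv.swap 1 i k))
    (hQf : ∀ k, J * Qfbig k * J = Qfbig (Equiv.swap 1 i k)) :
    ∀ t ∈ Icc 0 T, P i t = Jᵀ * P 1 t * J ∧ Jᵀ * P 0 t * J = P 0 t := by
  classical
  set σ : Equiv.Perm (Fin (N+1)) := Equiv.swap 1 i with hσdef
  -- basic index facts
  have h01 : (0 : Fin (N+1)) ≠ 1 := by
    rcases Nat.eq_zero_or_pos N with hN | hN
    · subst hN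
      exfalso
      apply hi0
      apply Fin.ext
      have hlt := i.isLt
      simp only [Fin.val_zero]
      omega
    · obtain ⟨m, rfl⟩ : ∃ m, N = m + 1 := ⟨N - 1, by omega⟩
      exact Fin.zero_ne_one
  have hσ0 : σ 0 = 0 := Equiv.swap_apply_of_ne_of_ne h01 (Ne.symm hi0)
  have hσinv : ∀ k, σ (σ k) = k := fun k => Equiv.swap_apply_self _ _ _
  have hσi : σ i = 1 := Equiv.swap_apply_right 1 i
  -- facts about J
  have hJT : Jᵀ = J := by
    ext p q
    rw [Matrix.transpose_apply, hJ q p, hJ p q]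
    refine if_congr ?_ rfl rfl
    constructor
    · rintro ⟨h1, h2⟩
      exact ⟨by rw [h1, Equiv.swap_apply_self], h2.symm⟩
    · rintro ⟨h1, h2⟩
      exact ⟨by rw [h1, Equiv.swap_apply_self], h2.symm⟩
  have hJJ : J * J = 1 := by
    ext p q
    rw [Matrix.mul_apply, Matrix.one_apply]
    rw [Finset.sum_eq_single (σ p.1, p.2)]
    · rw [hJ, hJ]
      rw [if_pos ⟨rfl, rfl⟩, one_mul]
      refine if_congr ?_ rfl rfl
      constructor
      · rintro ⟨h1, h2⟩
        rw [hσinv] at h1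
        exact Prod.ext h1.symm h2.symm
      · rintro rfl
        exact ⟨(hσinv _).symm, rfl⟩
    · intro c _ hc
      rw [hJ p c, if_neg, zero_mul]
      rintro ⟨h1, h2⟩
      exact hc (Prod.ext h1 h2)
    · intro h; exact absurd (Finset.mem_univ _) h
  -- conjugation of coefficient matrices
  have hBT : ∀ k, (Bbig k)ᵀ * J = (Bbig (σ k))ᵀ := by
    intro k
    have h2 := congrArg Matrix.transpose (hB k)
    rw [Matrix.transpose_mul, hJT] at h2
    exact h2
  have hA' : J * Ahatᵀ * J = Ahatᵀ := by
    have h2 := congrArg Matrix.transpose hA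
    rw [Matrix.transpose_mul, Matrix.transpose_mul, hJT, ← Matrix.mul_assoc] at h2
    exact h2
  have hC0c : J * (Bbig 0 * R0⁻¹ * (Bbig 0)ᵀ) * J = Bbig 0 * R0⁻¹ * (Bbig 0)ᵀ := by
    have h2 : J * (Bbig 0 * R0⁻¹ * (Bbig 0)ᵀ) * J = (J * Bbig 0) * R0⁻¹ * ((Bbig 0)ᵀ * J) := by
      simp only [Matrix.mul_assoc]
    rw [h2, hB 0, hBT 0, hσ0]
  have hCCc : ∀ k, J * ((fun k => Bbig k * R⁻¹ * (Bbig k)ᵀ) k) * J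
      = (fun k => Bbig k * R⁻¹ * (Bbig k)ᵀ) (σ k) := by
    intro k
    have h2 : J * (Bbig k * R⁻¹ * (Bbig k)ᵀ) * J = (J * Bbig k) * R⁻¹ * ((Bbig k)ᵀ * J) := by
      simp only [Matrix.mul_assoc]
    show J * (Bbig k * R⁻¹ * (Bbig k)ᵀ) * J = Bbig (σ k) * R⁻¹ * (Bbig (σ k))ᵀ
    rw [h2, hB k, hBT k]
  -- entrywise derivative of the solution, packaged through `vf`
  have hD : ∀ t ∈ Icc 0 T, ∀ l, ∀ a b, HasDerivWithinAt (fun s => P l s a b)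
      (vf Ahat (Bbig 0 * R0⁻¹ * (Bbig 0)ᵀ) (fun k => Bbig k * R⁻¹ * (Bbig k)ᵀ) Qbig
        (fun k => P k t) l a b) (Icc 0 T) t := by
    intro t ht l a b
    by_cases hl : l = 0
    · subst hl
      rw [show vf Ahat (Bbig 0 * R0⁻¹ * (Bbig 0)ᵀ) (fun k => Bbig k * R⁻¹ * (Bbig k)ᵀ) Qbig
          (fun k => P k t) 0
          = -(P 0 t * Ahat + Ahatᵀ * P 0 t)
            + P 0 t * Bbig 0 * R0⁻¹ * (Bbig 0)ᵀ * P 0 t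
            + ∑ k ∈ Finset.univ.filter (fun k : Fin (N + 1) => k ≠ 0),
                (P 0 t * Bbig k * R⁻¹ * (Bbig k)ᵀ * P k t
                  + P k t * Bbig k * R⁻¹ * (Bbig k)ᵀ * P 0 t)
            - Qbig 0 from by rw [vf_zero]; simp only [Matrix.mul_assoc]]
      exact hP0 t ht a b
    · rw [show vf Ahat (Bbig 0 * R0⁻¹ * (Bbig 0)ᵀ) (fun k => Bbig k * R⁻¹ * (Bbig k)ᵀ) Qbig
          (fun k => P k t) l
          = -(P l t * Ahat + Ahatᵀ * P l t)
            - P l t * Bbig l * R⁻¹ * (Bbig l)ᵀ * P l t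
            + (P l t * Bbig 0 * R0⁻¹ * (Bbig 0)ᵀ * P 0 t
                + P 0 t * Bbig 0 * R0⁻¹ * (Bbig 0)ᵀ * P l t)
            + ∑ k ∈ Finset.univ.filter (fun k : Fin (N + 1) => k ≠ 0),
                (P l t * Bbig k * R⁻¹ * (Bbig k)ᵀ * P k t
                  + P k t * Bbig k * R⁻¹ * (Bbig k)ᵀ * P l t)
            - Qbig l from by rw [vf_ne _ hl]; simp only [Matrix.mul_assoc]]
      exact hPi l hl t ht a b
  -- the two candidate solutions as curves in the pi-normed space
  have hf' : ∀ t ∈ Icc 0 T, HasDerivWithinAt (fun s : ℝ => (fun l => P l s : ES N n))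
      ((vf Ahat (Bbig 0 * R0⁻¹ * (Bbig 0)ᵀ) (fun k => Bbig k * R⁻¹ * (Bbig k)ᵀ) Qbig :
          ES N n → ES N n) (fun l => P l t)) (Icc 0 T) t := by
    intro t ht
    exact my_hasDerivWithinAt_pi fun l => my_hasDerivWithinAt_pi fun a =>
      my_hasDerivWithinAt_pi fun b => hD t ht l a b
  have hgD : ∀ t ∈ Icc 0 T, ∀ l, ∀ a b, HasDerivWithinAt (fun s => (J * P (σ l) s * J) a b)
      ((J * vf Ahat (Bbig 0 * R0⁻¹ * (Bbig 0)ᵀ) (fun k => Bbig k * R⁻¹ * (Bbig k)ᵀ) Qbig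
        (fun k => P k t) (σ l) * J) a b) (Icc 0 T) t := by
    intro t ht l a b
    simp only [Matrix.mul_apply]
    exact HasDerivWithinAt.fun_sum fun c _ => HasDerivWithinAt.mul_const
      (HasDerivWithinAt.fun_sum fun d _ => HasDerivWithinAt.const_mul _ (hD t ht (σ l) d c)) _
  have hg' : ∀ t ∈ Icc 0 T, HasDerivWithinAt (fun s : ℝ => (fun l => J * P (σ l) s * J : ES N n))
      ((vf Ahat (Bbig 0 * R0⁻¹ * (Bbig 0)ᵀ) (fun k => Bbig k * R⁻¹ * (Bbig k)ᵀ) Qbig :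
          ES N n → ES N n) (fun l => J * P (σ l) t * J)) (Icc 0 T) t := by
    intro t ht
    refine my_hasDerivWithinAt_pi fun l => ?_
    have e := vf_conj (A := Ahat) (C0 := Bbig 0 * R0⁻¹ * (Bbig 0)ᵀ)
      (CC := fun k => Bbig k * R⁻¹ * (Bbig k)ᵀ) (Q := Qbig)
      σ hσ0 hσinv J hJJ hA hA' hC0c hCCc hQ (fun k => P k t) l
    rw [show (vf Ahat (Bbig 0 * R0⁻¹ * (Bbig 0)ᵀ) (fun k => Bbig k * R⁻¹ * (Bbig k)ᵀ) Qbig :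
        ES N n → ES N n) (fun l => J * P (σ l) t * J) l
        = J * vf Ahat (Bbig 0 * R0⁻¹ * (Bbig 0)ᵀ) (fun k => Bbig k * R⁻¹ * (Bbig k)ᵀ) Qbig
            (fun k => P k t) (σ l) * J from e]
    exact my_hasDerivWithinAt_pi fun a => my_hasDerivWithinAt_pi fun b => hgD t ht l a b
  -- continuity and bounds
  have hfc : ContinuousOn (fun s : ℝ => (fun l => P l s : ES N n)) (Icc 0 T) :=
    fun t ht => (hf' t ht).continuousWithinAt
  have hgc : ContinuousOn (fun s : ℝ => (fun l => J * P (σ l) s * J : ES N n)) (Icc 0 T) :=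
    fun t ht => (hg' t ht).continuousWithinAt
  obtain ⟨Mf, hMf⟩ := isCompact_Icc.exists_bound_of_continuousOn hfc
  obtain ⟨Mg, hMg⟩ := isCompact_Icc.exists_bound_of_continuousOn hgc
  -- Lipschitz bound for the vector field on a large ball
  have hcd := vf_contDiff (N := N) (n := n) Ahat (Bbig 0 * R0⁻¹ * (Bbig 0)ᵀ)
    (fun k => Bbig k * R⁻¹ * (Bbig k)ᵀ) Qbig
  have hfd : Continuous (fderiv ℝ
      (show ES N n → ES N n from vf Ahat (Bbig 0 * R0⁻¹ * (Bbig 0)ᵀ)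
        (fun k => Bbig k * R⁻¹ * (Bbig k)ᵀ) Qbig)) := hcd.continuous_fderiv one_ne_zero
  obtain ⟨L, hL⟩ := (isCompact_closedBall (0 : ES N n) (max Mf Mg)).exists_bound_of_continuousOn
    (hcd.continuous_fderiv one_ne_zero).continuousOn
  have hL0 : 0 ≤ L := le_trans (norm_nonneg _) (hL _ (Metric.mem_closedBall_self
    (le_trans (norm_nonneg ((fun l => P l 0 : ES N n))) (le_trans (hMf 0 ⟨le_rfl, hT⟩)
      (le_max_left _ _)))))
  have hlip : LipschitzOnWith L.toNNReal
      (show ES N n → ES N n from vf Ahat (Bbig 0 * R0⁻¹ * (Bbig 0)ᵀ)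
        (fun k => Bbig k * R⁻¹ * (Bbig k)ᵀ) Qbig)
      (Metric.closedBall (0 : ES N n) (max Mf Mg)) := by
    apply Convex.lipschitzOnWith_of_nnnorm_fderiv_le
      (fun z _ => (hcd.differentiable one_ne_zero).differentiableAt)
      (fun z hz => ?_) (convex_closedBall _ _)
    rw [← norm_toNNReal]
    exact Real.toNNReal_mono (hL z hz)
  -- membership of the trajectories in the ball
  have hfs : ∀ t ∈ Ioc 0 T, (fun l => P l t : ES N n) ∈
      Metric.closedBall (0 : ES N n) (max Mf Mg) := fun t ht =>
    mem_closedBall_zero_iff.2 (le_trans (hMf t (Ioc_subset_Icc_self ht)) (le_max_left _ _))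
  have hgs : ∀ t ∈ Ioc 0 T, (fun l => J * P (σ l) t * J : ES N n) ∈
      Metric.closedBall (0 : ES N n) (max Mf Mg) := fun t ht =>
    mem_closedBall_zero_iff.2 (le_trans (hMg t (Ioc_subset_Icc_self ht)) (le_max_right _ _))
  -- equality at the terminal time
  have hend : (fun l => P l T : ES N n) = (fun l => J * P (σ l) T * J : ES N n) := by
    funext l
    show P l T = J * P (σ l) T * J
    rw [hPT l, hPT (σ l)]
    have h2 := hQf (σ l)
    rw [hσinv] at h2
    exact h2.symm
  -- the `Iic` versions of the derivative hypotheses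
  have hIic : ∀ t ∈ Ioc 0 T, Icc (0:ℝ) T ∈ nhdsWithin t (Iic t) := by
    intro t ht
    exact mem_nhdsWithin.2 ⟨Ioi 0, isOpen_Ioi, ht.1,
      fun y hy => ⟨le_of_lt hy.1, le_trans hy.2 ht.2⟩⟩
  -- uniqueness of ODE solutions, backwards from the terminal time
  have huniq : EqOn (fun s : ℝ => (fun l => P l s : ES N n))
      (fun s : ℝ => (fun l => J * P (σ l) s * J : ES N n)) (Icc 0 T) := by
    refine ODE_solution_unique_of_mem_Icc_left (fun _ _ => hlip) hfc ?_ hfs hgc ?_ hgs hend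
    · intro t ht
      exact (hf' t (Ioc_subset_Icc_self ht)).mono_of_mem_nhdsWithin (hIic t ht)
    · intro t ht
      exact (hg' t (Ioc_subset_Icc_self ht)).mono_of_mem_nhdsWithin (hIic t ht)
  -- conclusion
  intro t ht
  have h := huniq ht
  constructor
  · have h1 : P i t = J * P (σ i) t * J := congrFun h i
    rw [hσi] at h1
    rw [hJT]
    exact h1
  · have h0 : P 0 t = J * P (σ 0) t * J := congrFun h 0
    rw [hσ0] at h0
    rw [hJT]
    exact h0.symm
end

section
/- Suppose a symmetric matrix $\mathbf{P}_0 \in \mathbb{R}^{(N+1)n \times (N+1)n}$ (partitioned into $(N+1)\times(N+1)$ blocks of size $n\times n$) satisfies $J_{k,k+1}^T \mathbf{P}_0 J_{k,k+1} = \mathbf{P}_0$ for all $2 \le k \le N$. Then there exist $n\times n$ matrices $\Pi_1^0, \Pi_2^0, \Pi_3^0, \Pi_4^0$ with $\Pi_1^0, \Pi_3^0, \Pi_4^0$ symmetric such that the $(1,1)$ block of $\mathbf{P}_0$ is $\Pi_1^0$, every $(1,j)$ block with $j \ge 2$ equals $\Pi_2^0$, every diagonal block $(j,j)$ with $j \ge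 2$ equals $\Pi_3^0$, and every off-diagonal block $(j,k)$ with $2 \le j \ne k$ equals $\Pi_4^0$. -/
open Matrix

private lemma swap_conj_aux {α : Type*} [DecidableEq α] (a b c : α)
    (hab : a ≠ b) (hac : a ≠ c) (hbc : b ≠ c) (x : α) :
    Equiv.swap b c (Equiv.swap a b (Equiv.swap b c x)) = Equiv.swap a c x := by
  simp only [Equiv.swap_apply_def]
  split_ifs <;> simp_all

/-- Structural representation of the major player's Riccati matrix (Lemma A.1(i)):
a symmetric `(N+1)n × (N+1)n` block matrix invariant under all adjacent swaps
`J_{k,k+1}`, `2 ≤ k ≤ N`, of minor-player block indices has block structure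
`Π₁⁰` at `(1,1)`, `Π₂⁰` on the rest of the first block row, `Π₃⁰` on the remaining
diagonal, and `Π₄⁰` off-diagonal, with `Π₁⁰, Π₃⁰, Π₄⁰` symmetric. -/
theorem major_riccati_block_structure (N n : ℕ)
    (P : Matrix (Fin (N + 1) × Fin n) (Fin (N + 1) × Fin n) ℝ)
    (hsym : Pᵀ = P)
    (hswap : ∀ (k : ℕ) (h1 : 1 ≤ k) (h2 : k + 1 ≤ N),
      ∀ p q : Fin (N + 1) × Fin n,
        P p q = P (Equiv.swap (⟨k, by omega⟩ : Fin (N + 1)) ⟨k + 1, by omega⟩ p.1, p.2)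
                  (Equiv.swap (⟨k, by omega⟩ : Fin (N + 1)) ⟨k + 1, by omega⟩ q.1, q.2)) :
    ∃ Pi1 Pi2 Pi3 Pi4 : Matrix (Fin n) (Fin n) ℝ,
      Pi1ᵀ = Pi1 ∧ Pi3ᵀ = Pi3 ∧ Pi4ᵀ = Pi4
      ∧ (∀ p q, P (0, p) (0, q) = Pi1 p q)
      ∧ (∀ j : Fin (N + 1), j ≠ 0 → ∀ p q, P (0, p) (j, q) = Pi2 p q)
      ∧ (∀ j : Fin (N + 1), j ≠ 0 → ∀ p q, P (j, p) (j, q) = Pi3 p q)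
      ∧ (∀ j k : Fin (N + 1), j ≠ 0 → k ≠ 0 → j ≠ k →
          ∀ p q, P (j, p) (k, q) = Pi4 p q) := by
  have hsym' : ∀ a b, P a b = P b a := by
    intro a b
    conv_lhs => rw [← hsym]
    rfl
  -- invariance under general transpositions of nonzero indices
  have htrans : ∀ (a b : ℕ) (ha : 1 ≤ a) (hab : a < b) (hb : b ≤ N),
      ∀ p q : Fin (N + 1) × Fin n,
        P p q = P (Equiv.swap (⟨a, by omega⟩ : Fin (N + 1)) ⟨b, by omega⟩ p.1, p.2)
                  (Equiv.swap (⟨a, by omega⟩ : Fin (N + 1)) ⟨b, by omega⟩ q.1, q.2) := by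
    intro a b ha
    induction b with
    | zero => omega
    | succ b ih =>
      intro hab hb
      rcases Nat.lt_or_ge a b with h | h
      · -- conjugation step: swap a (b+1) = s ∘ swap a b ∘ s with s = swap b (b+1)
        have hb' : b ≤ N := by omega
        have Hs := hswap b (by omega) (by omega)
        have Hab := ih h hb'
        intro p q
        rw [Hs p q, Hab _ _, Hs _ _]
        have key : ∀ x : Fin (N + 1),
            Equiv.swap (⟨b, by omega⟩ : Fin (N + 1)) ⟨b + 1, by omega⟩
              (Equiv.swap (⟨a, by omega⟩ : Fin (N + 1)) ⟨b, by omega⟩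
                (Equiv.swap (⟨b, by omega⟩ : Fin (N + 1)) ⟨b + 1, by omega⟩ x)) =
            Equiv.swap (⟨a, by omega⟩ : Fin (N + 1)) ⟨b + 1, by omega⟩ x := by
          intro x
          exact swap_conj_aux _ _ _ (by simp only [ne_eq, Fin.mk.injEq]; omega)
            (by simp only [ne_eq, Fin.mk.injEq]; omega)
            (by simp only [ne_eq, Fin.mk.injEq]; omega) x
        rw [key p.1, key q.1]
      · -- base case: b = a, adjacent swap
        have hba : b = a := by omega
        subst hba
        exact hswap b (by omega) (by omega)
  have hswapInv : ∀ a b : Fin (N + 1), a ≠ 0 → b ≠ 0 →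
      ∀ p q : Fin (N + 1) × Fin n,
        P p q = P (Equiv.swap a b p.1, p.2) (Equiv.swap a b q.1, q.2) := by
    intro a b ha hb p q
    have ha' : 1 ≤ a.val := by
      rcases Nat.eq_zero_or_pos a.val with h | h
      · exact absurd (Fin.ext h) ha
      · exact h
    have hb' : 1 ≤ b.val := by
      rcases Nat.eq_zero_or_pos b.val with h | h
      · exact absurd (Fin.ext h) hb
      · exact h
    have haN : a.val ≤ N := by omega
    have hbN : b.val ≤ N := by omega
    rcases lt_trichotomy a.val b.val with h | h | h
    · have := htrans a.val b.val ha' h hbN p q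
      simpa using this
    · have hab : a = b := Fin.ext h
      subst hab
      simp [Equiv.swap_self]
    · have := htrans b.val a.val hb' h haN p q
      rw [Equiv.swap_comm a b]
      simpa using this
  refine ⟨Matrix.of fun p q => P (0, p) (0, q),
    (if h : 1 ≤ N then Matrix.of fun p q => P (0, p) (⟨1, by omega⟩, q) else 0),
    (if h : 1 ≤ N then Matrix.of fun p q =>
      P ((⟨1, by omega⟩ : Fin (N + 1)), p) (⟨1, by omega⟩, q) else 0),
    (if h : 2 ≤ N then Matrix.of fun p q =>
      P ((⟨1, by omega⟩ : Fin (N + 1)), p) (⟨2, by omega⟩, q) else 0),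
    ?_, ?_, ?_, ?_, ?_, ?_, ?_⟩
  · ext p q
    exact hsym' _ _
  · by_cases h : 1 ≤ N
    · rw [dif_pos h]
      ext p q
      exact hsym' _ _
    · rw [dif_neg h]
      simp
  · by_cases h : 2 ≤ N
    · rw [dif_pos h]
      ext p q
      have h1 : ((⟨1, by omega⟩ : Fin (N + 1))) ≠ 0 := by simp [Fin.ext_iff]
      have h2 : ((⟨2, by omega⟩ : Fin (N + 1))) ≠ 0 := by simp [Fin.ext_iff]
      have h12 : ((⟨1, by omega⟩ : Fin (N + 1))) ≠ ⟨2, by omega⟩ := by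
        simp [Fin.ext_iff]
      calc P ((⟨1, by omega⟩ : Fin (N + 1)), q) (⟨2, by omega⟩, p)
          = P ((⟨2, by omega⟩ : Fin (N + 1)), p) (⟨1, by omega⟩, q) := hsym' _ _
        _ = P ((⟨1, by omega⟩ : Fin (N + 1)), p) (⟨2, by omega⟩, q) := by
            have := hswapInv ⟨1, by omega⟩ ⟨2, by omega⟩ h1 h2
              ((⟨2, by omega⟩ : Fin (N + 1)), p) ((⟨1, by omega⟩ : Fin (N + 1)), q)
            simpa [Equiv.swap_apply_left, Equiv.swap_apply_right] using this
    · rw [dif_neg h]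
      simp
  · intro p q; rfl
  · intro j hj p q
    have hjv : 1 ≤ j.val := by
      rcases Nat.eq_zero_or_pos j.val with h | h
      · exact absurd (Fin.ext h) hj
      · exact h
    have hN : 1 ≤ N := by have := j.isLt; omega
    rw [dif_pos hN]
    have h1 : ((⟨1, by omega⟩ : Fin (N + 1))) ≠ 0 := by simp [Fin.ext_iff]
    have h0j : (0 : Fin (N + 1)) ≠ j := fun h => hj h.symm
    have h01 : (0 : Fin (N + 1)) ≠ ⟨1, by omega⟩ := by simp [Fin.ext_iff]
    have := hswapInv j ⟨1, by omega⟩ hj h1 ((0 : Fin (N + 1)), p) (j, q)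
    simpa [Equiv.swap_apply_of_ne_of_ne h0j h01, Equiv.swap_apply_left] using this
  · intro j hj p q
    have hjv : 1 ≤ j.val := by
      rcases Nat.eq_zero_or_pos j.val with h | h
      · exact absurd (Fin.ext h) hj
      · exact h
    have hN : 1 ≤ N := by have := j.isLt; omega
    rw [dif_pos hN]
    have h1 : ((⟨1, by omega⟩ : Fin (N + 1))) ≠ 0 := by simp [Fin.ext_iff]
    have := hswapInv j ⟨1, by omega⟩ hj h1 (j, p) (j, q)
    simpa [Equiv.swap_apply_left] using this
  · intro j k hj hk hjk p q
    have hjv : 1 ≤ j.val := by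
      rcases Nat.eq_zero_or_pos j.val with h | h
      · exact absurd (Fin.ext h) hj
      · exact h
    have hkv : 1 ≤ k.val := by
      rcases Nat.eq_zero_or_pos k.val with h | h
      · exact absurd (Fin.ext h) hk
      · exact h
    have hjkv : j.val ≠ k.val := fun h => hjk (Fin.ext h)
    have hN : 2 ≤ N := by have := j.isLt; have := k.isLt; omega
    rw [dif_pos hN]
    have h1 : ((⟨1, by omega⟩ : Fin (N + 1))) ≠ 0 := by simp [Fin.ext_iff]
    have h2 : ((⟨2, by omega⟩ : Fin (N + 1))) ≠ 0 := by simp [Fin.ext_iff]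
    -- step 1: reduce to the case j = 1
    have step1 : ∀ m : Fin (N + 1), m ≠ 0 → m ≠ ⟨1, by omega⟩ →
        P ((⟨1, by omega⟩ : Fin (N + 1)), p) (m, q)
          = P ((⟨1, by omega⟩ : Fin (N + 1)), p) (⟨2, by omega⟩, q) := by
      intro m hm0 hm1
      have := hswapInv m ⟨2, by omega⟩ hm0 h2
        ((⟨1, by omega⟩ : Fin (N + 1)), p) (m, q)
      have h1m : ((⟨1, by omega⟩ : Fin (N + 1))) ≠ m := fun h => hm1 h.symm
      have h12 : ((⟨1, by omega⟩ : Fin (N + 1))) ≠ ⟨2, by omega⟩ := by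
        simp [Fin.ext_iff]
      simpa [Equiv.swap_apply_of_ne_of_ne h1m h12, Equiv.swap_apply_left] using this
    by_cases hj1 : j = ⟨1, by omega⟩
    · rw [hj1]
      have hk1 : k ≠ ⟨1, by omega⟩ := fun h => hjk (hj1.trans h.symm)
      exact step1 k hk hk1
    · by_cases hk1 : k = ⟨1, by omega⟩
      · rw [hk1]
        have : P (j, p) ((⟨1, by omega⟩ : Fin (N + 1)), q)
            = P ((⟨1, by omega⟩ : Fin (N + 1)), p) (j, q) := by
          have := hswapInv j ⟨1, by omega⟩ hj h1
            (j, p) ((⟨1, by omega⟩ : Fin (N + 1)), q)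
          simpa [Equiv.swap_apply_left, Equiv.swap_apply_right] using this
        rw [this]
        exact step1 j hj hj1
      · have : P (j, p) (k, q) = P ((⟨1, by omega⟩ : Fin (N + 1)), p) (k, q) := by
          have := hswapInv j ⟨1, by omega⟩ hj h1 (j, p) (k, q)
          have hkj : k ≠ j := fun h => hjk h.symm
          simpa [Equiv.swap_apply_left, Equiv.swap_apply_of_ne_of_ne hkj hk1] using this
        rw [this]
        exact step1 k hk hk1
end

section
/- Let $g : (0, p] \times D_g \to \mathbb{R}^d$ be compactly of $O(\delta)$, i.e., for each compact $D_0 \subseteq D_g$ there exists $c_0$ with $\sup_{x \in D_0} |g(\delta, x)| \le c_0 \delta$ for all $\delta \in (0,p]$. Suppose $F : [0,T] \times D_g \to \mathbb{R}^d$ is continuous and locally Lipschitz in $x$, the limit terminal value problem $\dot{y} = F(t,y)$, $y(T) = y_T$, has a solution $y^*$ on $[0,T]$ with trajectory contained in the open set $D_g$, and $y^N$ solves $\dot{y}^N = F(t, y^N) + g(1/N, y^N)$ with $|y^N(T) - y_T| \le C/N$. Then there exists $N_0$ such that for all $N \ge N_0$ the perturbed solution $y^N$ exists on all of $[0,T]$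 and $\sup_{0 \le t \le T} |y^N(t) - y^*(t)| = O(1/N)$. -/
open Set Metric Filter Topology


variable {E : Type*} [NormedAddCommGroup E] [NormedSpace ℝ E]

/-- Radial retraction onto the closed ball of radius `r`. -/
noncomputable def radproj (r : ℝ) (z : E) : E := (r / max r ‖z‖) • z

theorem radproj_eq {r : ℝ} (hr : 0 < r) {z : E} (h : ‖z‖ ≤ r) : radproj r z = z := by
  rw [radproj, max_eq_left h, div_self hr.ne', one_smul]

theorem radproj_norm_le {r : ℝ} (hr : 0 < r) (z : E) : ‖radproj r z‖ ≤ ‖z‖ := by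
  rw [radproj, norm_smul]
  have h1 : 0 < max r ‖z‖ := lt_max_of_lt_left hr
  have h2 : r / max r ‖z‖ ≤ 1 := (div_le_one h1).2 (le_max_left _ _)
  have h3 : (0:ℝ) ≤ r / max r ‖z‖ := by positivity
  rw [Real.norm_eq_abs, abs_of_nonneg h3]
  nlinarith [norm_nonneg z]

theorem radproj_norm_le_r {r : ℝ} (hr : 0 < r) (z : E) : ‖radproj r z‖ ≤ r := by
  rw [radproj, norm_smul]
  have h1 : 0 < max r ‖z‖ := lt_max_of_lt_left hr
  have h3 : (0:ℝ) ≤ r / max r ‖z‖ := by positivity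
  rw [Real.norm_eq_abs, abs_of_nonneg h3, div_mul_eq_mul_div, div_le_iff₀ h1]
  nlinarith [le_max_right r ‖z‖, hr.le]

theorem radproj_lipschitz {r : ℝ} (hr : 0 < r) (a b : E) :
    ‖radproj r a - radproj r b‖ ≤ 2 * ‖a - b‖ := by
  set ma := max r ‖a‖ with hma
  set mb := max r ‖b‖ with hmb
  have hma0 : 0 < ma := lt_max_of_lt_left hr
  have hmb0 : 0 < mb := lt_max_of_lt_left hr
  have hrma : r ≤ ma := le_max_left _ _
  have hdm : |mb - ma| ≤ ‖a - b‖ := by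
    have h1 : |mb - ma| ≤ |‖b‖ - ‖a‖| := by
      rw [hma, hmb, max_comm r ‖a‖, max_comm r ‖b‖]
      exact abs_max_sub_max_le_abs _ _ _
    calc |mb - ma| ≤ |‖b‖ - ‖a‖| := h1
      _ ≤ ‖b - a‖ := abs_norm_sub_norm_le _ _
      _ = ‖a - b‖ := norm_sub_rev _ _
  have hfrac : r / ma ≤ 1 := (div_le_one hma0).2 hrma
  have t1 : ‖(r/ma) • a - (r/ma) • b‖ = (r/ma) * ‖a - b‖ := by
    rw [← smul_sub, norm_smul, Real.norm_eq_abs, abs_of_nonneg (by positivity)]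
  have t2 : ‖(r/ma) • b - (r/mb) • b‖ ≤ (r/ma) * ‖a - b‖ := by
    rw [← sub_smul, norm_smul, Real.norm_eq_abs]
    have habs : |r/ma - r/mb| = r * |mb - ma| / (ma * mb) := by
      rw [div_sub_div _ _ hma0.ne' hmb0.ne', abs_div, abs_of_pos (by positivity : (0:ℝ) < ma * mb)]
      congr 1
      rw [show r * mb - ma * r = r * (mb - ma) by ring, abs_mul, abs_of_pos hr]
    rw [habs]
    have hb : ‖b‖ ≤ mb := le_max_right _ _
    calc r * |mb - ma| / (ma * mb) * ‖b‖ ≤ r * ‖a - b‖ / (ma * mb) * mb := by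
          apply mul_le_mul _ hb (norm_nonneg b) (by positivity)
          apply div_le_div_of_nonneg_right (mul_le_mul_of_nonneg_left hdm hr.le) (by positivity)
      _ = (r/ma) * ‖a - b‖ := by field_simp
  calc ‖radproj r a - radproj r b‖
      ≤ ‖(r/ma) • a - (r/ma) • b‖ + ‖(r/ma) • b - (r/mb) • b‖ := by
        rw [radproj, radproj, ← hma, ← hmb]
        exact norm_sub_le_norm_sub_add_norm_sub _ _ _
    _ ≤ (r/ma) * ‖a - b‖ + (r/ma) * ‖a - b‖ := by rw [t1]; exact add_le_add_right t2 _
    _ ≤ 2 * ‖a - b‖ := by nlinarith [norm_nonneg (a - b), div_pos hr hma0]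



theorem lipschitz_approx_real {E : Type*} [NormedAddCommGroup E] {K : Set E} (hK : IsCompact K)
    {φ : E → ℝ} (hφ : ContinuousOn φ K) {ε : ℝ} (hε : 0 < ε) :
    ∃ (Lψ : ℝ) (ψ : E → ℝ), 0 ≤ Lψ ∧ (∀ x y, |ψ x - ψ y| ≤ Lψ * dist x y) ∧
      ∀ x ∈ K, |ψ x - φ x| ≤ ε := by
  rcases K.eq_empty_or_nonempty with hKe | hKne
  · exact ⟨0, fun _ => 0, le_refl 0, fun x y => by simp, fun x hx => by simp [hKe] at hx⟩
  haveI : Nonempty K := hKne.to_subtype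
  obtain ⟨B, hB⟩ := hK.exists_bound_of_continuousOn hφ
  have hB0 : 0 ≤ B := le_trans (norm_nonneg _) (hB _ hKne.some_mem)
  have huc := hK.uniformContinuousOn_of_continuous hφ
  rw [Metric.uniformContinuousOn_iff_le] at huc
  obtain ⟨δ, hδ0, hδ⟩ := huc ε hε
  set L : ℝ := (2 * B + ε) / δ with hLdef
  have hL0 : 0 ≤ L := by positivity
  set ψ : E → ℝ := fun x => ⨅ y : K, (φ y + L * dist x y) with hψdef
  have hbdd : ∀ x : E, BddBelow (range fun y : K => φ y + L * dist x y) := by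
    intro x
    refine ⟨-B, fun v hv => ?_⟩
    obtain ⟨y, rfl⟩ := hv
    simp only []
    have h1 : -B ≤ φ y := neg_le_of_abs_le (Real.norm_eq_abs (φ y) ▸ hB _ y.2)
    have h2 : 0 ≤ L * dist x y := by positivity
    linarith
  have hlip : ∀ x x', |ψ x - ψ x'| ≤ L * dist x x' := by
    have key : ∀ x x', ψ x ≤ ψ x' + L * dist x x' := by
      intro x x'
      have h1 : ψ x - L * dist x x' ≤ ψ x' := by
        refine le_ciInf fun y => ?_
        have h2 : ψ x ≤ φ y + L * dist x y := ciInf_le (hbdd x) y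
        have h3 : dist x y ≤ dist x x' + dist x' y := dist_triangle _ _ _
        nlinarith
      linarith
    intro x x'
    rw [abs_sub_le_iff]
    constructor
    · have := key x x'; linarith
    · have := key x' x; rw [dist_comm] at this; linarith
  refine ⟨L, ψ, hL0, hlip, fun x hx => ?_⟩
  have hup : ψ x ≤ φ x := by
    have := ciInf_le (hbdd x) (⟨x, hx⟩ : K)
    simpa using this
  have hlow : φ x - ε ≤ ψ x := by
    refine le_ciInf fun y => ?_
    rcases le_or_gt (dist x y) δ with hcase | hcase
    · have h1 : dist (φ x) (φ y) ≤ ε := hδ x hx y y.2 hcase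
      rw [Real.dist_eq, abs_sub_le_iff] at h1
      have h2 : 0 ≤ L * dist x (y:E) := by positivity
      linarith [h1.1]
    · have h1 : -B ≤ φ (y:E) := neg_le_of_abs_le (Real.norm_eq_abs (φ y) ▸ hB _ y.2)
      have h2 : φ x ≤ B := le_of_abs_le (Real.norm_eq_abs (φ x) ▸ hB _ hx)
      have h3 : L * δ ≤ L * dist x y := mul_le_mul_of_nonneg_left hcase.le hL0
      have h4 : L * δ = 2 * B + ε := by
        rw [hLdef, div_mul_cancel₀]
        exact hδ0.ne'
      linarith
  rw [abs_sub_le_iff]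
  exact ⟨by linarith, by linarith⟩

theorem lipschitz_approx {d : ℕ} {K : Set (Fin d → ℝ)} (hK : IsCompact K)
    {φ : (Fin d → ℝ) → (Fin d → ℝ)} (hφ : ContinuousOn φ K) {ε : ℝ} (hε : 0 < ε) :
    ∃ (Lh : NNReal) (h : (Fin d → ℝ) → (Fin d → ℝ)), LipschitzWith Lh h ∧
      ∀ x ∈ K, ‖h x - φ x‖ ≤ ε := by
  have hcomp : ∀ i : Fin d, ContinuousOn (fun x => φ x i) K :=
    fun i => (continuous_apply i).comp_continuousOn hφ
  choose L ψ hL0 hlip herr using fun i : Fin d => lipschitz_approx_real hK (hcomp i) hε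
  set Lmax : NNReal := Finset.univ.sup fun i => Real.toNNReal (L i) with hLmax
  refine ⟨Lmax, fun x i => ψ i x, ?_, ?_⟩
  · apply LipschitzWith.of_dist_le_mul
    intro x y
    rw [dist_pi_le_iff (by positivity)]
    intro i
    rw [Real.dist_eq]
    calc |ψ i x - ψ i y| ≤ L i * dist x y := hlip i x y
      _ ≤ (Lmax : ℝ) * dist x y := by
          apply mul_le_mul_of_nonneg_right _ dist_nonneg
          calc L i ≤ (Real.toNNReal (L i) : ℝ) := Real.le_coe_toNNReal _
            _ ≤ (Lmax : ℝ) := by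
                rw [hLmax]
                exact_mod_cast NNReal.coe_le_coe.2
                  (Finset.le_sup (f := fun i => Real.toNNReal (L i)) (Finset.mem_univ i))
  · intro x hx
    rw [pi_norm_le_iff_of_nonneg hε.le]
    intro i
    rw [Pi.sub_apply, Real.norm_eq_abs]
    exact herr i x hx



theorem radproj_lipschitzWith {E : Type*} [NormedAddCommGroup E] [NormedSpace ℝ E]
    {r : ℝ} (hr : 0 < r) : LipschitzWith 2 (radproj (E := E) r) := by
  apply LipschitzWith.of_dist_le_mul
  intro a b
  rw [dist_eq_norm, dist_eq_norm]
  exact_mod_cast radproj_lipschitz hr a b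

/-- From local Lipschitz continuity, uniform Lipschitz continuity on a compact set. -/
theorem uniform_lipschitz_on_compact {d : ℕ} {T : ℝ} {Dg K : Set (Fin d → ℝ)}
    {F : ℝ → (Fin d → ℝ) → (Fin d → ℝ)}
    (hFc : ContinuousOn (Function.uncurry F) (Icc 0 T ×ˢ Dg))
    (hFlip : ∀ x ∈ Dg, ∃ ε > 0, ∃ L : NNReal,
      ∀ t ∈ Icc 0 T, LipschitzOnWith L (F t) (Metric.ball x ε ∩ Dg))
    (hK : IsCompact K) (hKD : K ⊆ Dg) :
    ∃ Lf : ℝ, 1 ≤ Lf ∧ ∀ t ∈ Icc 0 T, ∀ x ∈ K, ∀ y ∈ K,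
      ‖F t x - F t y‖ ≤ Lf * ‖x - y‖ := by
  rcases K.eq_empty_or_nonempty with hKe | hKne
  · exact ⟨1, le_refl 1, fun t ht x hx => by simp [hKe] at hx⟩
  -- local data
  choose! eps heps Lloc hLloc using hFlip
  -- bound on F over Icc × K
  obtain ⟨M, hM⟩ := ((isCompact_Icc (a := (0:ℝ)) (b := T)).prod hK).exists_bound_of_continuousOn
    (hFc.mono (Set.prod_mono le_rfl hKD))
  have hM' : ∀ t ∈ Icc 0 T, ∀ x ∈ K, ‖F t x‖ ≤ max M 0 := fun t ht x hx =>
    le_max_of_le_left (hM (t, x) (Set.mk_mem_prod ht hx))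
  -- finite subcover
  obtain ⟨s, hsK, hscov⟩ := hK.elim_nhds_subcover (fun x => Metric.ball x (eps x / 2))
    (fun x hx => Metric.ball_mem_nhds x (by have := heps x (hKD hx); positivity))
  have hsne : s.Nonempty := by
    rcases hKne with ⟨x, hx⟩
    rcases Set.mem_iUnion₂.1 (hscov hx) with ⟨z, hz, _⟩
    exact ⟨z, hz⟩
  set ρ : ℝ := s.inf' hsne (fun z => eps z / 2) with hρdef
  have hρ0 : 0 < ρ := by
    rw [hρdef, Finset.lt_inf'_iff]
    intro z hz
    have := heps z (hKD (hsK z hz))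
    positivity
  set L0 : ℝ := s.sup' hsne (fun z => (Lloc z : ℝ)) with hL0def
  set Lf : ℝ := max 1 (max L0 (2 * max M 0 / ρ)) with hLfdef
  refine ⟨Lf, le_max_left _ _, fun t ht x hx y hy => ?_⟩
  rcases le_or_gt (dist x y) ρ with hcase | hcase
  · -- close case: use a ball from the cover
    rcases Set.mem_iUnion₂.1 (hscov hx) with ⟨z, hzs, hxz⟩
    have hzD : z ∈ Dg := hKD (hsK z hzs)
    have hεz := heps z hzD
    have hρz : ρ ≤ eps z / 2 := Finset.inf'_le _ hzs
    have hxball : x ∈ Metric.ball z (eps z) :=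
      Metric.mem_ball.2 (lt_of_lt_of_le (Metric.mem_ball.1 hxz) (by linarith))
    have hyball : y ∈ Metric.ball z (eps z) := by
      rw [Metric.mem_ball]
      calc dist y z ≤ dist y x + dist x z := dist_triangle _ _ _
        _ < ρ + eps z / 2 := by
            have := Metric.mem_ball.1 hxz
            rw [dist_comm y x]
            linarith
        _ ≤ eps z := by linarith
    have hlip := hLloc z hzD t ht
    have := hlip.dist_le_mul x ⟨hxball, hKD hx⟩ y ⟨hyball, hKD hy⟩
    rw [dist_eq_norm, dist_eq_norm] at this
    calc ‖F t x - F t y‖ ≤ (Lloc z : ℝ) * ‖x - y‖ := this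
      _ ≤ Lf * ‖x - y‖ := by
          apply mul_le_mul_of_nonneg_right _ (norm_nonneg _)
          calc (Lloc z : ℝ) ≤ L0 := Finset.le_sup' (f := fun z => (Lloc z : ℝ)) hzs
            _ ≤ Lf := le_trans (le_max_left _ _) (le_max_right _ _)
  · -- far case: use the bound
    have h1 : ‖F t x - F t y‖ ≤ 2 * max M 0 := by
      have := le_trans (norm_sub_le (F t x) (F t y)) (add_le_add (hM' t ht x hx) (hM' t ht y hy))
      linarith
    have h2 : 2 * max M 0 / ρ ≤ Lf := le_trans (le_max_right _ _) (le_max_right _ _)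
    have h3 : (2 * max M 0 / ρ) * ρ ≤ (2 * max M 0 / ρ) * dist x y :=
      mul_le_mul_of_nonneg_left hcase.le (by positivity)
    have h4 : (2 * max M 0 / ρ) * ρ = 2 * max M 0 := div_mul_cancel₀ _ hρ0.ne'
    have h5 : (0:ℝ) ≤ dist x y := dist_nonneg
    calc ‖F t x - F t y‖ ≤ 2 * max M 0 := h1
      _ ≤ (2 * max M 0 / ρ) * dist x y := by linarith
      _ ≤ Lf * dist x y := mul_le_mul_of_nonneg_right h2 h5
      _ = Lf * ‖x - y‖ := by rw [dist_eq_norm]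

/-- Time reversal of a derivative within `Icc 0 T`. -/
theorem hasDerivWithinAt_reverse {E : Type*} [NormedAddCommGroup E] [NormedSpace ℝ E]
    {T : ℝ} {f : ℝ → E} {v : ℝ → E}
    (hf : ∀ t ∈ Icc 0 T, HasDerivWithinAt f (v t) (Icc 0 T) t)
    {s : ℝ} (hs : s ∈ Icc (0:ℝ) T) :
    HasDerivWithinAt (fun u => f (T - u)) (-v (T - s)) (Icc 0 T) s := by
  have hmem : T - s ∈ Icc (0:ℝ) T := ⟨by linarith [hs.2], by linarith [hs.1]⟩
  have hinner : HasDerivWithinAt (fun u : ℝ => T - u) (-1) (Icc 0 T) s :=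
    (hasDerivWithinAt_id s (Icc 0 T)).const_sub T
  have hmaps : MapsTo (fun u : ℝ => T - u) (Icc 0 T) (Icc 0 T) := fun u hu => by
    simp only [mem_Icc] at hu ⊢
    constructor <;> linarith [hu.1, hu.2]
  have := (hf (T - s) hmem).scomp s hinner hmaps
  simpa [Function.comp_def] using this

theorem gronwallBound_mono_x {δ Kc ε x y : ℝ} (hδ : 0 ≤ δ) (hK : 0 < Kc) (hε : 0 ≤ ε)
    (hxy : x ≤ y) : gronwallBound δ Kc ε x ≤ gronwallBound δ Kc ε y := by
  rw [gronwallBound_of_K_ne_0 hK.ne']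
  simp only []
  have h1 : Real.exp (Kc * x) ≤ Real.exp (Kc * y) :=
    Real.exp_le_exp.2 (mul_le_mul_of_nonneg_left hxy hK.le)
  have h2 : (0:ℝ) ≤ ε / Kc := by positivity
  nlinarith [Real.exp_pos (Kc * x)]

theorem gronwallBound_div {δ Kc ε x : ℝ} (hK : Kc ≠ 0) (N : ℝ) :
    gronwallBound (δ / N) Kc (ε / N) x = gronwallBound δ Kc ε x / N := by
  have h1 := gronwallBound_of_K_ne_0 (δ := δ / N) (ε := ε / N) hK
  have h2 := gronwallBound_of_K_ne_0 (δ := δ) (ε := ε) hK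
  rw [funext_iff] at h1 h2
  rw [h1 x, h2 x]
  ring

theorem gronwallBound_nonneg {δ Kc ε x : ℝ} (hδ : 0 ≤ δ) (hK : 0 < Kc) (hε : 0 ≤ ε)
    (hx : 0 ≤ x) : 0 ≤ gronwallBound δ Kc ε x := by
  rw [gronwallBound_of_K_ne_0 hK.ne']
  simp only []
  have h1 : (1:ℝ) ≤ Real.exp (Kc * x) := Real.one_le_exp (by positivity)
  have h2 : (0:ℝ) ≤ ε / Kc := by positivity
  nlinarith [Real.exp_pos (Kc * x)]


section Main

variable {d : ℕ}

local notation "α" => (Fin d → ℝ)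

set_option maxHeartbeats 2000000 in
theorem main_skeleton (T p C : ℝ) (hT : 0 ≤ T) (hp : 0 < p)
    (Dg : Set (Fin d → ℝ)) (hDg : IsOpen Dg)
    (g : ℝ → (Fin d → ℝ) → (Fin d → ℝ))
    (hg : ∀ K ⊆ Dg, IsCompact K → ∃ c : ℝ, ∀ δ ∈ Ioc 0 p, ∀ x ∈ K, ‖g δ x‖ ≤ c * δ)
    (hgc : ∀ δ ∈ Ioc 0 p, ContinuousOn (g δ) Dg)
    (F : ℝ → (Fin d → ℝ) → (Fin d → ℝ))
    (hFc : ContinuousOn (Function.uncurry F) (Icc 0 T ×ˢ Dg))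
    (hFlip : ∀ x ∈ Dg, ∃ ε > 0, ∃ L : NNReal,
      ∀ t ∈ Icc 0 T, LipschitzOnWith L (F t) (Metric.ball x ε ∩ Dg))
    (ystar : ℝ → Fin d → ℝ) (yT : Fin d → ℝ)
    (hystar : ∀ t ∈ Icc 0 T,
      HasDerivWithinAt ystar (F t (ystar t)) (Icc 0 T) t ∧ ystar t ∈ Dg)
    (hystarT : ystar T = yT)
    (yTN : ℕ → (Fin d → ℝ))
    (hyTN : ∀ N : ℕ, 0 < N → ‖yTN N - yT‖ ≤ C / N) :
    ∃ N0 : ℕ, ∃ c : ℝ, ∀ N ≥ N0,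
      ∃ yN : ℝ → Fin d → ℝ,
        (∀ t ∈ Icc 0 T,
          HasDerivWithinAt yN (F t (yN t) + g (1 / N) (yN t)) (Icc 0 T) t ∧ yN t ∈ Dg)
        ∧ yN T = yTN N
        ∧ ∀ t ∈ Icc 0 T, ‖yN t - ystar t‖ ≤ c / N := by
  classical
  have hyc : ContinuousOn ystar (Icc 0 T) := fun t ht => (hystar t ht).1.continuousWithinAt
  set Γ : Set α := ystar '' Icc 0 T with hΓdef
  have hΓcomp : IsCompact Γ := isCompact_Icc.image_of_continuousOn hyc
  have hΓsub : Γ ⊆ Dg := by rintro _ ⟨t, ht, rfl⟩; exact (hystar t ht).2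
  obtain ⟨r, hr0, hKDg⟩ := hΓcomp.exists_cthickening_subset_open hDg hΓsub
  set K : Set α := Metric.cthickening r Γ with hKdef
  have hKcomp : IsCompact K := hΓcomp.cthickening
  have hystarK : ∀ t ∈ Icc 0 T, ystar t ∈ K :=
    fun t ht => Metric.self_subset_cthickening Γ ⟨t, ht, rfl⟩
  have htube : ∀ t ∈ Icc 0 T, ∀ z : α, ‖z - ystar t‖ ≤ r → z ∈ K := by
    intro t ht z hz
    exact Metric.mem_cthickening_of_dist_le z (ystar t) r Γ ⟨t, ht, rfl⟩
      (by rw [dist_eq_norm]; exact hz)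
  -- g bound on K
  obtain ⟨cK0, hcK0⟩ := hg K hKDg hKcomp
  set cK : ℝ := max cK0 0 with hcKdef
  have hcK : ∀ δ ∈ Ioc 0 p, ∀ x ∈ K, ‖g δ x‖ ≤ cK * δ := fun δ hδ x hx =>
    le_trans (hcK0 δ hδ x hx)
      (mul_le_mul_of_nonneg_right (le_max_left _ _) hδ.1.le)
  have hcK0' : (0:ℝ) ≤ cK := le_max_right _ _
  -- uniform Lipschitz constant on K
  obtain ⟨Lf, hLf1, hLf⟩ := uniform_lipschitz_on_compact hFc hFlip hKcomp hKDg
  have hLf0 : (0:ℝ) < Lf := lt_of_lt_of_le one_pos hLf1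
  -- bound on F over Icc × K
  obtain ⟨M0, hM0⟩ := (isCompact_Icc.prod hKcomp).exists_bound_of_continuousOn
    (hFc.mono (Set.prod_mono le_rfl hKDg))
  set M : ℝ := max M0 0 with hMdef
  have hMF : ∀ t ∈ Icc 0 T, ∀ x ∈ K, ‖F t x‖ ≤ M := fun t ht x hx =>
    le_max_of_le_left (hM0 (t, x) (Set.mk_mem_prod ht hx))
  have hM0' : (0:ℝ) ≤ M := le_max_right _ _
  set Mf : ℝ := M + cK + 2 with hMfdef
  have hMf0 : (0:ℝ) < Mf := by positivity
  -- the constant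
  set A : ℝ := gronwallBound (max C 0) Lf (cK + 1) T with hAdef
  have hA0 : 0 ≤ A := gronwallBound_nonneg (le_max_right _ _) hLf0 (by positivity) hT
  refine ⟨⌈A / r⌉₊ + ⌈1 / p⌉₊ + 1, A, fun N hN => ?_⟩
  have hN1 : 1 ≤ N := le_trans (by omega) hN
  have hNpos : (0:ℝ) < N := by exact_mod_cast Nat.pos_of_ne_zero (by omega)
  have hNr : (1:ℝ)/N ≤ 1 := by
    rw [div_le_one hNpos]; exact_mod_cast hN1
  have hδN : (1:ℝ)/N ∈ Ioc 0 p := by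
    constructor
    · positivity
    · rw [div_le_iff₀ hNpos]
      have h1 : (1:ℝ)/p ≤ (⌈1/p⌉₊ : ℝ) := Nat.le_ceil _
      have h2 : ((⌈1/p⌉₊ : ℕ) : ℝ) ≤ N := by
        exact_mod_cast le_trans (by omega) hN
      have key : (1:ℝ) ≤ p * N := by
        calc (1:ℝ) = p * (1/p) := by field_simp
          _ ≤ p * N := by
              apply mul_le_mul_of_nonneg_left _ hp.le
              linarith
      linarith
  have hAr : A / N ≤ r := by
    rw [div_le_iff₀ hNpos]
    have h1 : A / r ≤ (⌈A/r⌉₊ : ℝ) := Nat.le_ceil _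
    have h2 : ((⌈A/r⌉₊ : ℕ) : ℝ) ≤ N := by exact_mod_cast le_trans (by omega) hN
    have key : A ≤ r * N := by
      calc A = r * (A/r) := by field_simp
        _ ≤ r * N := mul_le_mul_of_nonneg_left (le_trans h1 h2) hr0.le
    linarith
  have hCN : ‖yTN N - yT‖ ≤ max C 0 / N :=
    le_trans (hyTN N (by omega)) (by gcongr; exact le_max_left _ _)
  -- Lipschitz approximations of g (1/N) on K
  have hgNc : ContinuousOn (g (1/(N:ℝ))) K := (hgc _ hδN).mono hKDg
  have hεm : ∀ m : ℕ, 0 < min ((1:ℝ)/N) (1/((m:ℝ)+1)) := by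
    intro m
    apply lt_min (by positivity) (by positivity)
  choose Lh h hhLip hherr using fun m : ℕ => lipschitz_approx hKcomp hgNc (hεm m)
  have hherr1 : ∀ m : ℕ, ∀ x ∈ K, ‖h m x - g (1/(N:ℝ)) x‖ ≤ 1/(N:ℝ) :=
    fun m x hx => le_trans (hherr m x hx) (min_le_left _ _)
  have hherr2 : ∀ m : ℕ, ∀ x ∈ K, ‖h m x - g (1/(N:ℝ)) x‖ ≤ 1/((m:ℝ)+1) :=
    fun m x hx => le_trans (hherr m x hx) (min_le_right _ _)
  have hgN : ∀ x ∈ K, ‖g (1/(N:ℝ)) x‖ ≤ cK/(N:ℝ) := by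
    intro x hx
    have := hcK _ hδN x hx
    calc ‖g (1/(N:ℝ)) x‖ ≤ cK * (1/(N:ℝ)) := this
      _ = cK/(N:ℝ) := by ring
  have hhnorm : ∀ m : ℕ, ∀ x ∈ K, ‖h m x‖ ≤ cK + 1 := by
    intro m x hx
    have h1 : ‖h m x‖ ≤ ‖h m x - g (1/(N:ℝ)) x‖ + ‖g (1/(N:ℝ)) x‖ := by
      calc ‖h m x‖ = ‖(h m x - g (1/(N:ℝ)) x) + g (1/(N:ℝ)) x‖ := by
            congr 1
            abel
        _ ≤ _ := norm_add_le _ _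
    have h2 := hherr1 m x hx
    have h3 := hgN x hx
    have h4 : cK/(N:ℝ) ≤ cK := by
      rw [div_le_iff₀ hNpos]
      nlinarith [hcK0', (show (1:ℝ) ≤ N by exact_mod_cast hN1)]
    have h5 : (1:ℝ)/N ≤ 1 := hNr
    linarith
  -- the retracted field
  set q : ℝ → α → α := fun t x => ystar t + radproj r (x - ystar t) with hqdef
  have hqsub : ∀ (t : ℝ) (x : α), q t x - ystar t = radproj r (x - ystar t) := by
    intro t x
    simp only [hqdef, add_sub_cancel_left]
  have hqK : ∀ t ∈ Icc (0:ℝ) T, ∀ x : α, q t x ∈ K := by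
    intro t ht x
    apply htube t ht
    rw [hqsub]
    exact radproj_norm_le_r hr0 _
  set u : ℕ → ℝ → α → α := fun m t x => F t (q t x) + h m (q t x) with hudef
  have hunorm : ∀ m : ℕ, ∀ t ∈ Icc (0:ℝ) T, ∀ x : α, ‖u m t x‖ ≤ Mf := by
    intro m t ht x
    have h1 := hMF t ht _ (hqK t ht x)
    have h2 := hhnorm m _ (hqK t ht x)
    calc ‖u m t x‖ ≤ ‖F t (q t x)‖ + ‖h m (q t x)‖ := norm_add_le _ _
      _ ≤ M + (cK + 1) := add_le_add h1 h2
      _ ≤ Mf := by rw [hMfdef]; linarith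
  -- Picard–Lindelöf solutions for the retracted approximated fields
  have hpic : ∀ m : ℕ, ∃ f : ℝ → α, f T = yTN N ∧
      ∀ t ∈ Icc (0:ℝ) T, HasDerivWithinAt f (u m t (f t)) (Icc 0 T) t := by
    intro m
    have hq2 : ∀ (t : ℝ) (x y : α), ‖q t x - q t y‖ ≤ 2 * ‖x - y‖ := by
      intro t x y
      have he : q t x - q t y = radproj r (x - ystar t) - radproj r (y - ystar t) := by
        simp only [hqdef]; abel
      rw [he]
      have h1 := radproj_lipschitz hr0 (x - ystar t) (y - ystar t)
      have h2 : (x - ystar t) - (y - ystar t) = x - y := by abel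
      rwa [h2] at h1
    have hPL : IsPicardLindelof (u m) (tmin := 0) (tmax := T) ⟨T, hT, le_rfl⟩ (yTN N)
        (Real.toNNReal (Mf * T + 1)) 0 (Real.toNNReal Mf) (2 * Real.toNNReal Lf + 2 * Lh m) := by
      refine ⟨?_, ?_, ?_, ?_⟩
      · intro t ht
        apply LipschitzWith.lipschitzOnWith
        apply LipschitzWith.of_dist_le_mul
        intro x y
        have hFq : ‖F t (q t x) - F t (q t y)‖ ≤ Lf * ‖q t x - q t y‖ :=
          hLf t ht _ (hqK t ht x) _ (hqK t ht y)
        have hhq : ‖h m (q t x) - h m (q t y)‖ ≤ (Lh m : ℝ) * ‖q t x - q t y‖ := by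
          have := (hhLip m).dist_le_mul (q t x) (q t y)
          rwa [dist_eq_norm, dist_eq_norm] at this
        have hq2' := hq2 t x y
        have hcoe : ((2 * Real.toNNReal Lf + 2 * Lh m : NNReal) : ℝ)
            = 2 * Lf + 2 * (Lh m : ℝ) := by
          push_cast [Real.coe_toNNReal _ hLf0.le]
          ring
        rw [dist_eq_norm, dist_eq_norm, hcoe]
        have hsplit : ‖u m t x - u m t y‖
            ≤ ‖F t (q t x) - F t (q t y)‖ + ‖h m (q t x) - h m (q t y)‖ := by
          have he : u m t x - u m t y
              = (F t (q t x) - F t (q t y)) + (h m (q t x) - h m (q t y)) := by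
            simp only [hudef]; abel
          rw [he]
          exact norm_add_le _ _
        have hLh0 : (0:ℝ) ≤ (Lh m : ℝ) := (Lh m).coe_nonneg
        nlinarith [norm_nonneg (q t x - q t y), norm_nonneg (x - y)]
      · intro x _
        have hqc : ContinuousOn (fun t => q t x) (Icc 0 T) := by
          apply hyc.add
          exact (radproj_lipschitzWith hr0).continuous.comp_continuousOn
            (continuousOn_const.sub hyc)
        have hFp : ContinuousOn (fun t => F t (q t x)) (Icc 0 T) := by
          have := hFc.comp (continuousOn_id.prodMk hqc)
            (fun t ht => Set.mk_mem_prod ht (hKDg (hqK t ht x)))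
          exact this
        exact hFp.add ((hhLip m).continuous.comp_continuousOn hqc)
      · exact fun t ht x _ => by rw [Real.coe_toNNReal _ hMf0.le]; exact hunorm m t ht x
      · have hmax : max (T - T) (T - 0) = T := by
          rw [sub_self, sub_zero]
          exact max_eq_right hT
        simp only [hmax, tsub_zero, NNReal.coe_zero, sub_zero, sub_self, max_eq_right hT, Real.coe_toNNReal _ hMf0.le,
          Real.coe_toNNReal _ (show (0:ℝ) ≤ Mf * T + 1 by positivity)]
        linarith
    obtain ⟨f, hf1, hf2⟩ := hPL.exists_eq_forall_mem_Icc_hasDerivWithinAt₀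
    exact ⟨f, hf1, hf2⟩
  choose f hfT hfd using hpic
  -- Grönwall tube estimate
  have hmemTs : ∀ s ∈ Icc (0:ℝ) T, T - s ∈ Icc (0:ℝ) T := fun s hs => by
    simp only [mem_Icc] at hs ⊢
    constructor <;> linarith [hs.1, hs.2]
  have htube_est : ∀ m : ℕ, ∀ t ∈ Icc (0:ℝ) T, ‖f m t - ystar t‖ ≤ A / N := by
    intro m
    set w : ℝ → α := fun s => f m (T - s) - ystar (T - s) with hwdef
    set w' : ℝ → α := fun s => -u m (T - s) (f m (T - s)) - -F (T - s) (ystar (T - s)) with hw'def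
    have hwd : ∀ s ∈ Icc (0:ℝ) T, HasDerivWithinAt w (w' s) (Icc 0 T) s := by
      intro s hs
      exact (hasDerivWithinAt_reverse (fun t' ht' => hfd m t' ht') hs).sub
        (hasDerivWithinAt_reverse (fun t' ht' => (hystar t' ht').1) hs)
    have hwc : ContinuousOn w (Icc 0 T) := fun s hs => (hwd s hs).continuousWithinAt
    have hw0 : ‖w 0‖ ≤ max C 0 / N := by
      have he : w 0 = yTN N - yT := by
        simp only [hwdef, sub_zero, hfT m, hystarT]
      rw [he]
      exact hCN
    have hbound : ∀ s ∈ Ico (0:ℝ) T, ‖w' s‖ ≤ Lf * ‖w s‖ + (cK + 1)/N := by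
      intro s hs
      have hsIcc : s ∈ Icc (0:ℝ) T := Ico_subset_Icc_self hs
      have ht' : T - s ∈ Icc (0:ℝ) T := hmemTs s hsIcc
      have hqpt : q (T - s) (f m (T - s)) ∈ K := hqK _ ht' _
      have h1 : ‖F (T-s) (ystar (T-s)) - F (T-s) (q (T-s) (f m (T-s)))‖
          ≤ Lf * ‖ystar (T-s) - q (T-s) (f m (T-s))‖ :=
        hLf _ ht' _ (hystarK _ ht') _ hqpt
      have h2 : ‖ystar (T-s) - q (T-s) (f m (T-s))‖ ≤ ‖w s‖ := by
        have e1 : ystar (T-s) - q (T-s) (f m (T-s))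
            = -(radproj r (f m (T-s) - ystar (T-s))) := by
          rw [← hqsub (T-s) (f m (T-s))]
          abel
        rw [e1, norm_neg]
        exact radproj_norm_le hr0 _
      have h3 : ‖h m (q (T-s) (f m (T-s)))‖ ≤ (cK + 1)/N := by
        have e2 : ‖h m (q (T-s) (f m (T-s)))‖
            ≤ ‖h m (q (T-s) (f m (T-s))) - g (1/(N:ℝ)) (q (T-s) (f m (T-s)))‖
              + ‖g (1/(N:ℝ)) (q (T-s) (f m (T-s)))‖ := by
          calc ‖h m (q (T-s) (f m (T-s)))‖
              = ‖(h m (q (T-s) (f m (T-s))) - g (1/(N:ℝ)) (q (T-s) (f m (T-s))))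
                  + g (1/(N:ℝ)) (q (T-s) (f m (T-s)))‖ := by
                congr 1
                abel
            _ ≤ _ := norm_add_le _ _
        have h4 := hherr1 m _ hqpt
        have h5 := hgN _ hqpt
        have h6 : cK/(N:ℝ) + 1/(N:ℝ) = (cK + 1)/N := by ring
        linarith
      have e3 : w' s = (F (T-s) (ystar (T-s)) - F (T-s) (q (T-s) (f m (T-s))))
          - h m (q (T-s) (f m (T-s))) := by
        simp only [hw'def, hudef]
        abel
      calc ‖w' s‖ ≤ ‖F (T-s) (ystar (T-s)) - F (T-s) (q (T-s) (f m (T-s)))‖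
            + ‖h m (q (T-s) (f m (T-s)))‖ := by
            rw [e3]
            exact norm_sub_le _ _
        _ ≤ Lf * ‖w s‖ + (cK + 1)/N :=
            add_le_add (le_trans h1 (mul_le_mul_of_nonneg_left h2 hLf0.le)) h3
    have hgron := norm_le_gronwallBound_of_norm_deriv_right_le hwc
      (fun x hx => (hwd x (Ico_subset_Icc_self hx)).mono_of_mem_nhdsWithin
        (Icc_mem_nhdsGE_of_mem hx))
      hw0 hbound
    intro t ht
    have hs' : T - t ∈ Icc (0:ℝ) T := hmemTs t ht
    have hkey := hgron (T - t) hs'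
    have hwt : w (T - t) = f m t - ystar t := by
      simp only [hwdef, sub_sub_cancel]
    rw [hwt, sub_zero] at hkey
    calc ‖f m t - ystar t‖ ≤ gronwallBound (max C 0 / N) Lf ((cK+1)/N) (T - t) := hkey
      _ ≤ gronwallBound (max C 0 / N) Lf ((cK+1)/N) T :=
          gronwallBound_mono_x (by positivity) hLf0 (by positivity) (by linarith [ht.1])
      _ = A / N := by
          rw [hAdef]
          exact gronwallBound_div hLf0.ne' (N:ℝ)
  -- consequences of the tube estimate
  have hfK : ∀ m : ℕ, ∀ t ∈ Icc (0:ℝ) T, f m t ∈ K :=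
    fun m t ht => htube t ht _ (le_trans (htube_est m t ht) hAr)
  have hqf : ∀ m : ℕ, ∀ t ∈ Icc (0:ℝ) T, q t (f m t) = f m t := by
    intro m t ht
    simp only [hqdef]
    rw [radproj_eq hr0 (le_trans (htube_est m t ht) hAr)]
    abel
  have hfd' : ∀ m : ℕ, ∀ t ∈ Icc (0:ℝ) T,
      HasDerivWithinAt (f m) (F t (f m t) + h m (f m t)) (Icc 0 T) t := by
    intro m t ht
    have hd := hfd m t ht
    simp only [hudef] at hd
    rwa [hqf m t ht] at hd
  have hfc : ∀ m : ℕ, ContinuousOn (f m) (Icc 0 T) :=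
    fun m t ht => (hfd m t ht).continuousWithinAt
  have hfLip : ∀ m : ℕ, ∀ x ∈ Icc (0:ℝ) T, ∀ y ∈ Icc (0:ℝ) T,
      ‖f m y - f m x‖ ≤ Mf * ‖y - x‖ := by
    intro m x hx y hy
    exact (convex_Icc (0:ℝ) T).norm_image_sub_le_of_norm_hasDerivWithin_le
      (f' := fun t => u m t (f m t))
      (fun t' ht' => hfd m t' ht') (fun t' ht' => hunorm m t' ht' _) hx hy
  -- Arzelà–Ascoli
  set X := Icc (0:ℝ) T with hXdef
  haveI hXc : CompactSpace X := isCompact_iff_compactSpace.mp isCompact_Icc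
  set Fm : ℕ → C(X, α) := fun m => ⟨fun x => f m x, (hfc m).restrict⟩ with hFmdef
  set S0 : Set C(X, α) :=
    {G | (∀ x : X, G x ∈ K) ∧ ∀ x y : X, dist (G x) (G y) ≤ Mf * dist x y} with hS0def
  have hS0comp : IsCompact S0 := by
    apply ArzelaAscoli.isCompact_of_equicontinuous
    · have himg : (ContinuousMap.toFun '' S0) =
          {v : X → α | (∀ x, v x ∈ K) ∧ ∀ x y : X, dist (v x) (v y) ≤ Mf * dist x y} := by
        ext v
        constructor
        · rintro ⟨G, hG, rfl⟩
          exact hG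
        · rintro ⟨h1, h2⟩
          have hvc : Continuous v := by
            have hlip : LipschitzWith (Real.toNNReal Mf) v := by
              apply LipschitzWith.of_dist_le_mul
              intro x y
              rw [Real.coe_toNNReal _ hMf0.le]
              exact h2 x y
            exact hlip.continuous
          exact ⟨⟨v, hvc⟩, ⟨h1, h2⟩, rfl⟩
      rw [himg]
      have hsub : {v : X → α | (∀ x, v x ∈ K) ∧ ∀ x y : X, dist (v x) (v y) ≤ Mf * dist x y}
          ⊆ Set.univ.pi (fun _ : X => K) := fun v hv x _ => hv.1 x
      apply IsCompact.of_isClosed_subset (isCompact_univ_pi (fun _ => hKcomp)) _ hsub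
      have hc1 : IsClosed {v : X → α | ∀ x, v x ∈ K} := by
        have he : {v : X → α | ∀ x, v x ∈ K} = ⋂ x, (fun v : X → α => v x) ⁻¹' K := by
          ext v; simp
        rw [he]
        exact isClosed_iInter (fun x => hKcomp.isClosed.preimage (continuous_apply x))
      have hc2 : IsClosed {v : X → α | ∀ x y : X, dist (v x) (v y) ≤ Mf * dist x y} := by
        have he : {v : X → α | ∀ x y : X, dist (v x) (v y) ≤ Mf * dist x y}
            = ⋂ (x : X), ⋂ (y : X), {v : X → α | dist (v x) (v y) ≤ Mf * dist x y} := by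
          ext v; simp
        rw [he]
        refine isClosed_iInter fun x => isClosed_iInter fun y => ?_
        exact isClosed_le ((continuous_apply x).dist (continuous_apply y)) continuous_const
      have he2 : {v : X → α | (∀ x, v x ∈ K) ∧ ∀ x y : X, dist (v x) (v y) ≤ Mf * dist x y}
          = {v : X → α | ∀ x, v x ∈ K} ∩ {v : X → α | ∀ x y : X, dist (v x) (v y) ≤ Mf * dist x y} :=
        rfl
      rw [he2]
      exact hc1.inter hc2
    · apply Metric.equicontinuous_of_continuity_modulus (fun t => Mf * t)
      · have hco : Tendsto (fun t : ℝ => Mf * t) (nhds 0) (nhds (Mf * 0)) :=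
          (continuous_const.mul continuous_id).tendsto 0
        simpa using hco
      · intro x y G
        exact G.2.2 x y
  have hFmS0 : ∀ m, Fm m ∈ S0 := by
    intro m
    constructor
    · intro x
      exact hfK m x x.2
    · intro x y
      have hd : dist ((Fm m) x) ((Fm m) y) = ‖f m x - f m y‖ := dist_eq_norm _ _
      rw [hd, Subtype.dist_eq, dist_eq_norm]
      exact hfLip m y y.2 x x.2
  obtain ⟨Glim, hGlimS, φ, hφmono, hφtend⟩ := hS0comp.tendsto_subseq hFmS0
  set yN : ℝ → α := fun t => Glim (projIcc 0 T hT t) with hyNdef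
  have hyNc : Continuous yN := Glim.continuous.comp continuous_projIcc
  have hyNK : ∀ s : ℝ, yN s ∈ K := fun s => hGlimS.1 _
  have hev : ∀ t, ∀ ht : t ∈ Icc (0:ℝ) T, Tendsto (fun k => f (φ k) t) atTop (𝓝 (yN t)) := by
    intro t ht
    have hval : yN t = Glim ⟨t, ht⟩ := by
      simp only [hyNdef]
      rw [projIcc_of_mem hT ht]
    rw [hval]
    have h1 : Tendsto (fun k => (Fm (φ k)) ⟨t, ht⟩) atTop (𝓝 (Glim ⟨t, ht⟩)) :=
      ((continuous_eval_const (⟨t, ht⟩ : X)).tendsto Glim).comp hφtend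
    exact h1
  -- integral identities for the approximate solutions
  have hΦmc : ∀ m : ℕ, ContinuousOn (fun s => F s (f m s) + h m (f m s)) (Icc 0 T) := by
    intro m
    have hFpart : ContinuousOn (fun s => F s (f m s)) (Icc 0 T) := by
      have := hFc.comp (continuousOn_id.prodMk (hfc m))
        (fun s hs => Set.mk_mem_prod hs (hKDg (hfK m s hs)))
      exact this
    exact hFpart.add ((hhLip m).continuous.comp_continuousOn (hfc m))
  have hint : ∀ m : ℕ, ∀ t ∈ Icc (0:ℝ) T,
      yTN N - f m t = ∫ s in t..T, (F s (f m s) + h m (f m s)) := by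
    intro m t ht
    have hieq := intervalIntegral.integral_eq_sub_of_hasDeriv_right_of_le ht.2
      ((hfc m).mono (Icc_subset_Icc ht.1 le_rfl))
      (fun x hx => by
        have hxI : x ∈ Icc (0:ℝ) T := ⟨le_trans ht.1 hx.1.le, hx.2.le⟩
        exact ((hfd' m x hxI).hasDerivAt
          (Icc_mem_nhds (lt_of_le_of_lt ht.1 hx.1) hx.2)).hasDerivWithinAt)
      (((hΦmc m).mono (by rw [uIcc_of_le ht.2]; exact Icc_subset_Icc ht.1 le_rfl)).intervalIntegrable)
    rw [hfT m] at hieq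
    exact hieq.symm
  -- the limit integral identity
  have hlimint : ∀ t ∈ Icc (0:ℝ) T,
      yTN N - yN t = ∫ s in t..T, (F s (yN s) + g (1/(N:ℝ)) (yN s)) := by
    intro t ht
    have hLHS : Tendsto (fun k => yTN N - f (φ k) t) atTop (𝓝 (yTN N - yN t)) :=
      tendsto_const_nhds.sub (hev t ht)
    have hφatTop : Tendsto (fun k => ((φ k : ℝ) + 1)) atTop atTop :=
      tendsto_atTop_add_const_right _ 1 (tendsto_natCast_atTop_atTop.comp hφmono.tendsto_atTop)
    have hRHS : Tendsto (fun k => ∫ s in t..T, (F s (f (φ k) s) + h (φ k) (f (φ k) s))) atTop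
        (𝓝 (∫ s in t..T, (F s (yN s) + g (1/(N:ℝ)) (yN s)))) := by
      apply intervalIntegral.tendsto_integral_filter_of_dominated_convergence (fun _ => Mf)
      · apply Filter.Eventually.of_forall
        intro k
        apply ContinuousOn.aestronglyMeasurable ((hΦmc (φ k)).mono ?_) measurableSet_uIoc
        rw [uIoc_of_le ht.2]
        exact fun s hs => ⟨le_trans ht.1 hs.1.le, hs.2⟩
      · apply Filter.Eventually.of_forall
        intro k
        apply MeasureTheory.ae_of_all
        intro s hs
        have hsI : s ∈ Icc (0:ℝ) T := by
          rw [uIoc_of_le ht.2] at hs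
          exact ⟨le_trans ht.1 hs.1.le, hs.2⟩
        have hb1 := hMF s hsI _ (hfK (φ k) s hsI)
        have hb2 := hhnorm (φ k) _ (hfK (φ k) s hsI)
        calc ‖F s (f (φ k) s) + h (φ k) (f (φ k) s)‖
            ≤ ‖F s (f (φ k) s)‖ + ‖h (φ k) (f (φ k) s)‖ := norm_add_le _ _
          _ ≤ M + (cK + 1) := add_le_add hb1 hb2
          _ ≤ Mf := by rw [hMfdef]; linarith
      · exact intervalIntegrable_const
      · apply MeasureTheory.ae_of_all
        intro s hs
        have hsI : s ∈ Icc (0:ℝ) T := by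
          rw [uIoc_of_le ht.2] at hs
          exact ⟨le_trans ht.1 hs.1.le, hs.2⟩
        have h1 : Tendsto (fun k => f (φ k) s) atTop (𝓝 (yN s)) := hev s hsI
        have h2 : Tendsto (fun k => F s (f (φ k) s)) atTop (𝓝 (F s (yN s))) := by
          have hcw : ContinuousWithinAt (Function.uncurry F) (Icc 0 T ×ˢ Dg) (s, yN s) :=
            hFc _ (Set.mk_mem_prod hsI (hKDg (hyNK s)))
          have hin : Tendsto (fun k => ((s, f (φ k) s) : ℝ × (Fin d → ℝ))) atTop
              (𝓝[Icc 0 T ×ˢ Dg] (s, yN s)) := by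
            rw [tendsto_nhdsWithin_iff]
            constructor
            · exact tendsto_const_nhds.prodMk_nhds h1
            · exact Filter.Eventually.of_forall
                fun k => Set.mk_mem_prod hsI (hKDg (hfK (φ k) s hsI))
          exact hcw.tendsto.comp hin
        have h3 : Tendsto (fun k => g (1/(N:ℝ)) (f (φ k) s)) atTop
            (𝓝 (g (1/(N:ℝ)) (yN s))) := by
          have hcw : ContinuousWithinAt (g (1/(N:ℝ))) Dg (yN s) :=
            (hgc _ hδN) _ (hKDg (hyNK s))
          have hin : Tendsto (fun k => f (φ k) s) atTop (𝓝[Dg] (yN s)) := by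
            rw [tendsto_nhdsWithin_iff]
            exact ⟨h1, Filter.Eventually.of_forall fun k => hKDg (hfK (φ k) s hsI)⟩
          exact hcw.tendsto.comp hin
        have h4 : Tendsto (fun k => h (φ k) (f (φ k) s) - g (1/(N:ℝ)) (f (φ k) s)) atTop
            (𝓝 0) := by
          apply squeeze_zero_norm (fun k => hherr2 (φ k) _ (hfK (φ k) s hsI))
          have := tendsto_inv_atTop_zero.comp hφatTop
          simpa [one_div, Function.comp_def] using this
        have h5 : Tendsto (fun k => g (1/(N:ℝ)) (f (φ k) s)
            + (h (φ k) (f (φ k) s) - g (1/(N:ℝ)) (f (φ k) s))) atTop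
            (𝓝 (g (1/(N:ℝ)) (yN s) + 0)) := h3.add h4
        have h6 : (fun k => g (1/(N:ℝ)) (f (φ k) s)
            + (h (φ k) (f (φ k) s) - g (1/(N:ℝ)) (f (φ k) s)))
            = fun k => h (φ k) (f (φ k) s) := by
          funext k
          abel
        rw [h6, add_zero] at h5
        exact h2.add h5
    have hcongr : Tendsto (fun k => yTN N - f (φ k) t) atTop
        (𝓝 (∫ s in t..T, (F s (yN s) + g (1/(N:ℝ)) (yN s)))) := by
      apply hRHS.congr
      intro k
      exact (hint (φ k) t ht).symm
    exact tendsto_nhds_unique hLHS hcongr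
  -- upgrade to a globally continuous integrand
  set clamp : ℝ → ℝ := fun s => min (max s 0) T with hclampdef
  have hclampc : Continuous clamp := (continuous_id.max continuous_const).min continuous_const
  have hclampmem : ∀ s : ℝ, clamp s ∈ Icc (0:ℝ) T :=
    fun s => ⟨le_min (le_max_right s 0) hT, min_le_right _ _⟩
  have hclampeq : ∀ s ∈ Icc (0:ℝ) T, clamp s = s := by
    intro s hs
    simp only [hclampdef]
    rw [max_eq_left hs.1, min_eq_left hs.2]
  set Φh : ℝ → α := fun s => F (clamp s) (yN s) + g (1/(N:ℝ)) (yN s) with hΦhdef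
  have hΦhc : Continuous Φh := by
    have h1 : Continuous fun s => F (clamp s) (yN s) := by
      have := hFc.comp_continuous (hclampc.prodMk hyNc)
        (fun s => Set.mk_mem_prod (hclampmem s) (hKDg (hyNK s)))
      exact this
    exact h1.add ((hgc _ hδN).comp_continuous hyNc (fun s => hKDg (hyNK s)))
  have hΦheq : ∀ s ∈ Icc (0:ℝ) T, Φh s = F s (yN s) + g (1/(N:ℝ)) (yN s) := by
    intro s hs
    simp only [hΦhdef]
    rw [hclampeq s hs]
  have hlimint' : ∀ t ∈ Icc (0:ℝ) T, yTN N - yN t = ∫ s in t..T, Φh s := by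
    intro t ht
    rw [hlimint t ht]
    apply intervalIntegral.integral_congr
    intro s hs
    rw [uIcc_of_le ht.2] at hs
    exact (hΦheq s ⟨le_trans ht.1 hs.1, hs.2⟩).symm
  have hFTC : ∀ t : ℝ, HasDerivAt (fun v => ∫ s in (0:ℝ)..v, Φh s) (Φh t) t := by
    intro t
    exact intervalIntegral.integral_hasDerivAt_right (hΦhc.intervalIntegrable _ _)
      (hΦhc.stronglyMeasurableAtFilter _ _) hΦhc.continuousAt
  have hyNderiv : ∀ t ∈ Icc (0:ℝ) T,
      HasDerivWithinAt yN (F t (yN t) + g (1/(N:ℝ)) (yN t)) (Icc 0 T) t := by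
    intro t ht
    have hG : HasDerivWithinAt
        (fun v => (yTN N - ∫ s in (0:ℝ)..T, Φh s) + ∫ s in (0:ℝ)..v, Φh s)
        (Φh t) (Icc 0 T) t := ((hFTC t).hasDerivWithinAt).const_add _
    have heqon : ∀ v ∈ Icc (0:ℝ) T,
        yN v = (yTN N - ∫ s in (0:ℝ)..T, Φh s) + ∫ s in (0:ℝ)..v, Φh s := by
      intro v hv
      have h5 := hlimint' v hv
      have h6 : (∫ s in (0:ℝ)..v, Φh s) + ∫ s in v..T, Φh s = ∫ s in (0:ℝ)..T, Φh s :=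
        intervalIntegral.integral_add_adjacent_intervals (hΦhc.intervalIntegrable _ _)
          (hΦhc.intervalIntegrable _ _)
      have h7 : yN v = yTN N - ∫ s in v..T, Φh s := by
        rw [← h5]
        abel
      rw [h7, ← h6]
      abel
    have hfin := hG.congr heqon (heqon t ht)
    rwa [hΦheq t ht] at hfin
  -- assemble
  refine ⟨yN, fun t ht => ⟨hyNderiv t ht, hKDg (hyNK t)⟩, ?_, fun t ht => ?_⟩
  · have h5 := hlimint' T ⟨hT, le_rfl⟩
    rw [intervalIntegral.integral_same] at h5
    have h6 : yTN N = yN T := sub_eq_zero.mp h5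
    exact h6.symm
  · have h8 : Tendsto (fun k => ‖f (φ k) t - ystar t‖) atTop (𝓝 ‖yN t - ystar t‖) :=
      ((hev t ht).sub tendsto_const_nhds).norm
    exact le_of_tendsto h8 (Filter.Eventually.of_forall fun k => htube_est (φ k) t ht)


end Main

/-- Perturbation estimate for terminal value problems: if the limit problem
`ẏ = F(t,y)`, `y(T) = y_T` has a solution `y*` on `[0,T]` with trajectory in the
open set `D_g`, the perturbation `g` is compactly of `O(δ)` and continuous in the
state, and the perturbed terminal data satisfy `‖y_T^N - y_T‖ ≤ C/N`, then for all
large `N` the perturbed problem `ẏ = F(t,y) + g(1/N, y)` with terminal value `y_T^N`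
has a solution on all of `[0,T]`, and `sup_{[0,T]} ‖y^N - y*‖ = O(1/N)`. -/
theorem terminal_ode_perturbation_estimate (d : ℕ) (T p C : ℝ) (hT : 0 ≤ T) (hp : 0 < p)
    (Dg : Set (Fin d → ℝ)) (hDg : IsOpen Dg)
    (g : ℝ → (Fin d → ℝ) → (Fin d → ℝ))
    (hg : ∀ K ⊆ Dg, IsCompact K → ∃ c : ℝ, ∀ δ ∈ Ioc 0 p, ∀ x ∈ K, ‖g δ x‖ ≤ c * δ)
    (hgc : ∀ δ ∈ Ioc 0 p, ContinuousOn (g δ) Dg)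
    (F : ℝ → (Fin d → ℝ) → (Fin d → ℝ))
    (hFc : ContinuousOn (Function.uncurry F) (Icc 0 T ×ˢ Dg))
    (hFlip : ∀ x ∈ Dg, ∃ ε > 0, ∃ L : NNReal,
      ∀ t ∈ Icc 0 T, LipschitzOnWith L (F t) (Metric.ball x ε ∩ Dg))
    (ystar : ℝ → Fin d → ℝ) (yT : Fin d → ℝ)
    (hystar : ∀ t ∈ Icc 0 T,
      HasDerivWithinAt ystar (F t (ystar t)) (Icc 0 T) t ∧ ystar t ∈ Dg)
    (hystarT : ystar T = yT)
    (yTN : ℕ → (Fin d → ℝ))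
    (hyTN : ∀ N : ℕ, 0 < N → ‖yTN N - yT‖ ≤ C / N) :
    ∃ N0 : ℕ, ∃ c : ℝ, ∀ N ≥ N0,
      ∃ yN : ℝ → Fin d → ℝ,
        (∀ t ∈ Icc 0 T,
          HasDerivWithinAt yN (F t (yN t) + g (1 / N) (yN t)) (Icc 0 T) t ∧ yN t ∈ Dg)
        ∧ yN T = yTN N
        ∧ ∀ t ∈ Icc 0 T, ‖yN t - ystar t‖ ≤ c / N := by
  exact main_skeleton T p C hT hp Dg hDg g hg hgc F hFc hFlip ystar yT hystar hystarT yTN hyTN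
end
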